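/- Let E be a k-coloured graph and C a complete, associative collection of squares such that the associated k-graph Λ = Λ_{(E,C)} is row-finite with no sources. Let π: E^{∞,k} → Λ^∞ be the map sending a k-infinite coloured path to the infinite path it traverses. Then a subset U ⊆ Λ^∞ is open (in the cylinder-set topology) if and only if π^{-1}(U) is open in E^{∞,k}; i.e., Λ^∞ carries the quotient topology induced by π. -/

import Mathlib

/-!
Completeness of `C` makes a `C`-compatible grid morphism determined by any nonempty path
it traverses: along a traversed staircase, each adjacent transposition of the colour word
crosses a square of `C`, which is fixed by its other two edges, and every edge of the grid
lies on a staircase whose colour word is a permutation of the original one. Hence `π z` and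
`π y` share the initial segment of degree `d(y₁ ⋯ yₙ)` as soon as `z` and `y` share `n`
edges, which makes `π` continuous. Conversely, reading off the edges of `x ∈ Λ^∞` along the
cyclic staircase with colour word `0 1 ⋯ (k-1) 0 1 ⋯` gives a continuous section of `π`, so
`π` is a quotient map. For `k = 0` there are no coloured paths and `Λ^∞` is discrete.
-/

namespace Paper


/-- A `k`-coloured (directed) graph. -/
structure ColouredGraph (k : ℕ) where
  V : Type
  E : Type
  r : E → V
  s : E → V
  c : E → Fin k

variable {k : ℕ}

/-- The model grid `E_{k,m}`: vertices `{n ≤ m}`, an edge of colour `i`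
from `n + e_i` to `n` whenever `n + e_i ≤ m`. -/
def grid (k : ℕ) (m : Fin k → ℕ) : ColouredGraph k where
  V := {n : Fin k → ℕ // n ≤ m}
  E := {p : (Fin k → ℕ) × Fin k // p.1 + Pi.single p.2 1 ≤ m}
  r e := ⟨e.1.1, le_trans (le_add_of_nonneg_right zero_le) e.2⟩
  s e := ⟨e.1.1 + Pi.single e.1.2 1, e.2⟩
  c e := e.1.2

/-- A coloured-graph morphism. -/
structure CGM (E F : ColouredGraph k) where
  onV : E.V → F.V
  onE : E.E → F.E
  r_comm : ∀ e, F.r (onE e) = onV (E.r e)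
  s_comm : ∀ e, F.s (onE e) = onV (E.s e)
  c_comm : ∀ e, F.c (onE e) = E.c e

/-- Composition of coloured-graph morphisms. -/
def CGM.compose {E F G : ColouredGraph k} (g : CGM F G) (f : CGM E F) : CGM E G where
  onV := g.onV ∘ f.onV
  onE := g.onE ∘ f.onE
  r_comm e := by simp [Function.comp, g.r_comm, f.r_comm]
  s_comm e := by simp [Function.comp, g.s_comm, f.s_comm]
  c_comm e := by simp [Function.comp, g.c_comm, f.c_comm]

/-- The range `λ(0)` of a coloured-graph morphism defined on a grid. -/
def gRng {E : ColouredGraph k} {m : Fin k → ℕ} (lam : CGM (grid k m) E) : E.V :=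
  lam.onV ⟨0, zero_le⟩

/-- The source `λ(m)` of a coloured-graph morphism defined on a grid. -/
def gSrc {E : ColouredGraph k} {m : Fin k → ℕ} (lam : CGM (grid k m) E) : E.V :=
  lam.onV ⟨m, le_refl m⟩

/-- The translated restriction `λ|*_{[p, p+m']}` of `λ : E_{k,M} → E`. -/
def restrictTo {E : ColouredGraph k} {M : Fin k → ℕ} (lam : CGM (grid k M) E)
    (p m' : Fin k → ℕ) (h : p + m' ≤ M) : CGM (grid k m') E where
  onV n := lam.onV ⟨p + n.1, le_trans (add_le_add (le_refl p) n.2) h⟩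
  onE e := lam.onE ⟨(p + e.1.1, e.1.2), by
    rw [add_assoc]; exact le_trans (add_le_add (le_refl p) e.2) h⟩
  r_comm e := lam.r_comm _
  s_comm e := by
    refine (lam.s_comm _).trans ?_
    exact congrArg lam.onV (Subtype.ext (add_assoc p e.1.1 _))
  c_comm e := lam.c_comm _

/-- A coloured-graph morphism from some grid into `E`, bundled with its degree. -/
def MorphOf (E : ColouredGraph k) : Type := Σ m : Fin k → ℕ, CGM (grid k m) E

/-- The shape (abelianized colouring) of a finite path, as an element of `ℕ^k`. -/
def colourVec (E : ColouredGraph k) (x : List E.E) : Fin k → ℕ :=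
  (x.map (fun e => Pi.single (E.c e) 1)).sum

/-- A list of edges is a path when consecutive edges are composable. -/
def IsPathList (E : ColouredGraph k) (x : List E.E) : Prop :=
  x.Chain' (fun e f => E.s e = E.r f)

/-- `x` traverses `λ`: the edges of `x` match those of `λ` along the staircase
determined by the colour sequence of `x`. -/
def Traverses {E : ColouredGraph k} {m : Fin k → ℕ} (lam : CGM (grid k m) E)
    (x : List E.E) : Prop :=
  colourVec E x = m ∧ ∀ (l : ℕ) (hl : l < x.length),
    ∃ h : colourVec E (x.take l) + Pi.single (E.c (x.get ⟨l, hl⟩)) 1 ≤ m,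
      lam.onE ⟨(colourVec E (x.take l), E.c (x.get ⟨l, hl⟩)), h⟩ = x.get ⟨l, hl⟩

/-- A bundled grid morphism is a square when its degree is `e_i + e_j` with `i ≠ j`. -/
def IsSquarePair {E : ColouredGraph k} (φ : MorphOf E) : Prop :=
  ∃ i j : Fin k, i ≠ j ∧ φ.1 = Pi.single i 1 + Pi.single j 1

/-- A complete collection of squares. -/
def Complete (E : ColouredGraph k) (C : Set (MorphOf E)) : Prop :=
  (∀ φ ∈ C, IsSquarePair φ) ∧
  ∀ e f : E.E, E.s e = E.r f → E.c e ≠ E.c f →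
    ∃! φ : MorphOf E, φ ∈ C ∧ Traverses φ.2 [e, f]

/-- `CRel C e f f' e'` means `ef ∼_C f'e'`: the paths `ef` and `f'e'` traverse a
common square of `C`, with `f'` of the colour of `f` and `e'` of the colour of `e`. -/
def CRel (E : ColouredGraph k) (C : Set (MorphOf E)) (e f f' e' : E.E) : Prop :=
  E.c f' = E.c f ∧ E.c e' = E.c e ∧
  ∃ φ ∈ C, Traverses φ.2 [e, f] ∧ Traverses φ.2 [f', e']

/-- Associativity of a complete collection of squares. -/
def Associative (E : ColouredGraph k) (C : Set (MorphOf E)) : Prop :=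
  ∀ f g h f1 f2 g1 g2 h1 h2 f1' f2' g1' g2' h1' h2' : E.E,
    E.s f = E.r g → E.s g = E.r h →
    E.c f ≠ E.c g → E.c g ≠ E.c h → E.c f ≠ E.c h →
    CRel E C f g g1' f1' → CRel E C f1' h h1' f2' → CRel E C g1' h1' h2' g2' →
    CRel E C g h h1 g1 → CRel E C f h1 h2 f1 → CRel E C f1 g1 g2 f2 →
    f2 = f2' ∧ g2 = g2' ∧ h2 = h2'

/-- `λ` is `C`-compatible: every square occurring in `λ` belongs to `C`. -/
def CComp (E : ColouredGraph k) (C : Set (MorphOf E)) {M : Fin k → ℕ}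
    (lam : CGM (grid k M) E) : Prop :=
  ∀ (p : Fin k → ℕ) (i j : Fin k), i ≠ j →
    ∀ h : p + (Pi.single i 1 + Pi.single j 1) ≤ M,
      (⟨Pi.single i 1 + Pi.single j 1,
        restrictTo lam p (Pi.single i 1 + Pi.single j 1) h⟩ : MorphOf E) ∈ C

/-- A finite path in a coloured graph, remembering its range vertex (so that
length-zero paths are vertices). -/
structure FinPath (E : ColouredGraph k) where
  rng : E.V
  edges : List E.E
  chain : edges.Chain' (fun e f => E.s e = E.r f)
  head_rng : ∀ e ∈ edges.head?, E.r e = rng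

/-- Source vertex of a finite path. -/
def FinPath.src {E : ColouredGraph k} (x : FinPath E) : E.V :=
  (x.edges.getLast?).elim x.rng E.s

/-- One application of a commuting square: replace a consecutive bicoloured pair
by its `C`-equivalent pair. -/
def SwapStep (E : ColouredGraph k) (C : Set (MorphOf E)) (x y : List E.E) : Prop :=
  ∃ (l r : List E.E) (e f f' e' : E.E),
    x = l ++ e :: f :: r ∧ y = l ++ f' :: e' :: r ∧ CRel E C e f f' e'

/-- The relation on finite paths generating the equivalence `∼`. -/
def PathRel (E : ColouredGraph k) (C : Set (MorphOf E)) (x y : FinPath E) : Prop :=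
  x.rng = y.rng ∧ SwapStep E C x.edges y.edges


lemma tsub_chain_bound {k : ℕ} {p q r : Fin k → ℕ} (h1 : p ≤ q) (h2 : q ≤ r) :
    (q - p) + (r - q) ≤ r - p := by
  rw [Pi.le_def]
  intro i
  have hi1 : p i ≤ q i := h1 i
  have hi2 : q i ≤ r i := h2 i
  simp only [Pi.add_apply, Pi.sub_apply]
  omega

lemma tsub_le_restrict {k : ℕ} {p q r : Fin k → ℕ} (h1 : p ≤ q) (h2 : q ≤ r) :
    (0 : Fin k → ℕ) + (q - p) ≤ r - p := by
  rw [zero_add]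
  exact tsub_le_tsub_right h2 p

/-- An infinite path in `Λ_{(E,C)}`: a coherent family of `C`-compatible
coloured-graph morphisms `x(p,q) : E_{k,q-p} → E` for `p ≤ q`. -/
structure LamInfPath (E : ColouredGraph k) (C : Set (MorphOf E)) where
  seg : ∀ p q : Fin k → ℕ, p ≤ q → CGM (grid k (q - p)) E
  ccomp : ∀ p q h, CComp E C (seg p q h)
  coh1 : ∀ (p q r : Fin k → ℕ) (h1 : p ≤ q) (h2 : q ≤ r),
    restrictTo (seg p r (h1.trans h2)) 0 (q - p) (tsub_le_restrict h1 h2) = seg p q h1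
  coh2 : ∀ (p q r : Fin k → ℕ) (h1 : p ≤ q) (h2 : q ≤ r),
    restrictTo (seg p r (h1.trans h2)) (q - p) (r - q) (tsub_chain_bound h1 h2) = seg q r h2

/-- The cylinder-set topology on `Λ^∞`, generated by the sets
`Z(μ) = {x : x(0,d(μ)) = μ}`. -/
def lamTop (E : ColouredGraph k) (C : Set (MorphOf E)) :
    TopologicalSpace (LamInfPath E C) :=
  TopologicalSpace.generateFrom
    {S | ∃ (m : Fin k → ℕ) (μ : CGM (grid k m) E),
      S = {x : LamInfPath E C |
        (⟨m - 0, x.seg 0 m zero_le⟩ : MorphOf E) = ⟨m, μ⟩}}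

/-- The space of infinite paths in `E` with infinitely many edges of every
colour. -/
def InfCPath (E : ColouredGraph k) : Type :=
  {x : ℕ → E.E // (∀ n, E.s (x n) = E.r (x (n + 1))) ∧
    ∀ i : Fin k, {n : ℕ | E.c (x n) = i}.Infinite}

/-- The cylinder topology on infinite coloured paths (subspace of the product
of discrete spaces). -/
def infTop (E : ColouredGraph k) : TopologicalSpace (InfCPath E) :=
  TopologicalSpace.induced (Subtype.val)
    (@Pi.topologicalSpace ℕ (fun _ => E.E) (fun _ => ⊥))

/-- The list of the first `n` edges of an infinite path. -/
def takeList {E : ColouredGraph k} (x : ℕ → E.E) (n : ℕ) : List E.E :=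
  List.ofFn (fun i : Fin n => x i)

open Filter Topology

section ColourWords

variable {k : ℕ}

def wordDeg (w : List (Fin k)) : Fin k → ℕ :=
  (w.map fun i => Pi.single i 1).sum

@[simp] lemma wordDeg_nil : wordDeg ([] : List (Fin k)) = 0 := rfl

@[simp] lemma wordDeg_cons (a : Fin k) (w : List (Fin k)) :
    wordDeg (a :: w) = Pi.single a 1 + wordDeg w := rfl

@[simp] lemma wordDeg_append (u v : List (Fin k)) :
    wordDeg (u ++ v) = wordDeg u + wordDeg v := by
  simp [wordDeg]

lemma wordDeg_apply (w : List (Fin k)) (i : Fin k) : wordDeg w i = w.count i := by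
  induction w with
  | nil => rfl
  | cons a w ih =>
    rw [wordDeg_cons, Pi.add_apply, ih, List.count_cons, Pi.single_apply]
    by_cases h : i = a
    · subst h; simp [add_comm]
    · simp [h, Ne.symm h]

lemma perm_of_wordDeg_eq {w w' : List (Fin k)} (h : wordDeg w = wordDeg w') : w.Perm w' :=
  List.perm_iff_count.2 fun i => by rw [← wordDeg_apply, ← wordDeg_apply, h]

lemma exists_wordDeg_eq (q : Fin k → ℕ) : ∃ w : List (Fin k), wordDeg w = q := by
  refine ⟨(List.finRange k).flatMap fun i => List.replicate (q i) i, funext fun i => ?_⟩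
  rw [wordDeg_apply, List.count_flatMap, ← Fin.sum_univ_def]
  simp [List.count_replicate]

end ColourWords

section GridMorphisms

variable {k : ℕ} {E : ColouredGraph k} {M : Fin k → ℕ}

lemma colourVec_eq_wordDeg (x : List E.E) : colourVec E x = wordDeg (x.map E.c) := by
  simp [colourVec, wordDeg, List.map_map, Function.comp_def]

@[simp] lemma colourVec_nil : colourVec E [] = 0 := rfl

@[simp] lemma colourVec_cons (e : E.E) (x : List E.E) :
    colourVec E (e :: x) = Pi.single (E.c e) 1 + colourVec E x := rfl

@[simp] lemma colourVec_append (x y : List E.E) :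
    colourVec E (x ++ y) = colourVec E x + colourVec E y := by
  simp [colourVec]

lemma colourVec_ne_zero {x : List E.E} (hx : x ≠ []) : colourVec E x ≠ 0 := by
  obtain ⟨e, x, rfl⟩ := List.exists_cons_of_ne_nil hx
  intro h
  simpa using congrFun h (E.c e)

lemma CGM.onE_congr {F : ColouredGraph k} (f : CGM (grid k M) F) {q q' : Fin k → ℕ}
    {i i' : Fin k} (hq : q = q') (hi : i = i') (h : q + Pi.single i 1 ≤ M)
    (h' : q' + Pi.single i' 1 ≤ M) : f.onE ⟨(q, i), h⟩ = f.onE ⟨(q', i'), h'⟩ := by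
  subst hq hi
  rfl

/-- Every vertex of a nontrivial grid is the range or the source of an edge. -/
lemma CGM.ext_of_onE {F : ColouredGraph k} {f g : CGM (grid k M) F} (hM : M ≠ 0)
    (h : f.onE = g.onE) : f = g := by
  have hV : f.onV = g.onV := by
    funext ⟨n, hn⟩
    by_cases hnM : n = M
    · subst hnM
      obtain ⟨a, ha⟩ := Function.ne_iff.1 hM
      have hsrc : (n - Pi.single a 1) + Pi.single a 1 = n := by
        funext l
        by_cases hl : l = a
        · subst hl; simp only [Pi.add_apply, Pi.sub_apply, Pi.single_eq_same]
          simp only [Pi.zero_apply] at ha; omega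
        · simp [hl]
      let e : (grid k n).E := ⟨(n - Pi.single a 1, a), hsrc.le⟩
      have hse : (grid k n).s e = ⟨n, hn⟩ := Subtype.ext hsrc
      rw [← hse, ← f.s_comm, ← g.s_comm, h]
    · obtain ⟨i, hi⟩ : ∃ i, n i < M i := by
        by_contra! hcon
        exact hnM (le_antisymm hn hcon)
      have hfit : n + Pi.single i 1 ≤ M := fun l => by
        by_cases hl : l = i
        · subst hl; simpa using hi
        · simpa [Pi.single_apply, hl] using hn l
      let e : (grid k M).E := ⟨(n, i), hfit⟩
      change f.onV ((grid k M).r e) = g.onV ((grid k M).r e)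
      rw [← f.r_comm, ← g.r_comm, h]
  cases f; cases g
  cases hV; cases h
  rfl

lemma traverses_square {i j : Fin k} (φ : CGM (grid k (Pi.single i 1 + Pi.single j 1)) E)
    (h0 : (0 : Fin k → ℕ) + Pi.single i 1 ≤ Pi.single i 1 + Pi.single j 1)
    (h1 : Pi.single i 1 + Pi.single j 1 ≤ Pi.single i 1 + Pi.single j 1) :
    Traverses φ [φ.onE ⟨(0, i), h0⟩, φ.onE ⟨(Pi.single i 1, j), h1⟩] := by
  have hci : E.c (φ.onE ⟨(0, i), h0⟩) = i := φ.c_comm _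
  have hcj : E.c (φ.onE ⟨(Pi.single i 1, j), h1⟩) = j := φ.c_comm _
  refine ⟨by simp [colourVec, hci, hcj], fun l hl => ?_⟩
  simp only [List.length_cons, List.length_nil] at hl
  interval_cases l
  · simp only [List.get_eq_getElem, List.getElem_cons_zero, List.take_zero]
    exact ⟨by simp [colourVec, hci], φ.onE_congr rfl hci _ _⟩
  · simp only [List.get_eq_getElem, List.getElem_cons_succ, List.getElem_cons_zero,
      List.take_succ_cons, List.take_zero]
    exact ⟨by simp [colourVec, hci, hcj], φ.onE_congr (by simp [colourVec, hci]) hcj _ _⟩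

lemma eq_of_mem_of_traverses {C : Set (MorphOf E)} (hC : Complete E C) {m : Fin k → ℕ}
    {φ φ' : CGM (grid k m) E} (hφ : (⟨m, φ⟩ : MorphOf E) ∈ C)
    (hφ' : (⟨m, φ'⟩ : MorphOf E) ∈ C) {e f : E.E} (hef : E.s e = E.r f)
    (hc : E.c e ≠ E.c f) (ht : Traverses φ [e, f]) (ht' : Traverses φ' [e, f]) : φ = φ' :=
  sigma_mk_injective (β := fun m => CGM (grid k m) E)
    ((hC.2 e f hef hc).unique ⟨hφ, ht⟩ ⟨hφ', ht'⟩)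

def EdgeAgree (lam lam' : CGM (grid k M) E) (p : Fin k → ℕ) (i : Fin k) : Prop :=
  ∀ h, lam.onE ⟨(p, i), h⟩ = lam'.onE ⟨(p, i), h⟩

lemma edgeAgree_of_restrictTo_eq {lam lam' : CGM (grid k M) E} {p m : Fin k → ℕ}
    {hm : p + m ≤ M} (h : restrictTo lam p m hm = restrictTo lam' p m hm) {q : Fin k → ℕ}
    {i : Fin k} (hq : q + Pi.single i 1 ≤ m) : EdgeAgree lam lam' (p + q) i :=
  fun _ => congrArg (fun ψ => ψ.onE ⟨(q, i), hq⟩) h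

lemma CComp.edgeAgree_swap {C : Set (MorphOf E)} (hC : Complete E C)
    {lam lam' : CGM (grid k M) E} (h : CComp E C lam) (h' : CComp E C lam')
    {i j : Fin k} (hij : i ≠ j) {p : Fin k → ℕ}
    (hsq : p + (Pi.single i 1 + Pi.single j 1) ≤ M) (hi : EdgeAgree lam lam' p i)
    (hj : EdgeAgree lam lam' (p + Pi.single i 1) j) :
    EdgeAgree lam lam' p j ∧ EdgeAgree lam lam' (p + Pi.single j 1) i := by
  have h0 : (0 : Fin k → ℕ) + Pi.single i 1 ≤ Pi.single i 1 + Pi.single j 1 := by simp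
  have h1 : (Pi.single i 1 : Fin k → ℕ) + Pi.single j 1 ≤ Pi.single i 1 + Pi.single j 1 :=
    le_rfl
  have hfit : p + Pi.single i 1 ≤ M :=
    le_trans (by simp : p + Pi.single i 1 ≤ p + (Pi.single i 1 + Pi.single j 1)) hsq
  have hfit' : p + Pi.single i 1 + Pi.single j 1 ≤ M := by rwa [add_assoc]
  set φ := restrictTo lam p _ hsq
  set φ' := restrictTo lam' p _ hsq
  set e := lam.onE ⟨(p, i), hfit⟩
  set f := lam.onE ⟨(p + Pi.single i 1, j), hfit'⟩
  have ht : Traverses φ [e, f] := by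
    have he : φ.onE ⟨(0, i), h0⟩ = e := lam.onE_congr (add_zero p) rfl _ _
    have hf : φ.onE ⟨(Pi.single i 1, j), h1⟩ = f := rfl
    simpa only [he, hf] using traverses_square φ h0 h1
  have ht' : Traverses φ' [e, f] := by
    have he : φ'.onE ⟨(0, i), h0⟩ = e :=
      (lam'.onE_congr (add_zero p) rfl _ hfit).trans (hi _).symm
    have hf : φ'.onE ⟨(Pi.single i 1, j), h1⟩ = f := (hj _).symm
    simpa only [he, hf] using traverses_square φ' h0 h1
  have hef : E.s e = E.r f :=
    (lam.s_comm _).trans (lam.r_comm ⟨(p + Pi.single i 1, j), hfit'⟩).symm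
  have hc : E.c e ≠ E.c f :=
    (lam.c_comm _).trans_ne (hij.trans_eq (lam.c_comm ⟨(p + Pi.single i 1, j), hfit'⟩).symm)
  have hφ : φ = φ' :=
    eq_of_mem_of_traverses hC (h p i j hij hsq) (h' p i j hij hsq) hef hc ht ht'
  constructor
  · simpa using edgeAgree_of_restrictTo_eq hφ
      (show (0 : Fin k → ℕ) + Pi.single j 1 ≤ Pi.single i 1 + Pi.single j 1 by simp)
  · exact edgeAgree_of_restrictTo_eq hφ (by rw [add_comm])

end GridMorphisms

section Uniqueness

variable {k : ℕ} {E : ColouredGraph k} {C : Set (MorphOf E)} {M : Fin k → ℕ}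
  {lam lam' : CGM (grid k M) E}

/-- `lam` and `lam'` agree on the staircase of edges that starts at `p` with colours `w`. -/
def AgreeAlong (lam lam' : CGM (grid k M) E) : (Fin k → ℕ) → List (Fin k) → Prop
  | _, [] => True
  | p, a :: w => EdgeAgree lam lam' p a ∧ AgreeAlong lam lam' (p + Pi.single a 1) w

lemma AgreeAlong.edgeAgree_of_append {p : Fin k → ℕ} {u v : List (Fin k)} {j : Fin k}
    (h : AgreeAlong lam lam' p (u ++ j :: v)) : EdgeAgree lam lam' (p + wordDeg u) j := by
  induction u generalizing p with
  | nil => simpa using h.1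
  | cons a u ih => simpa [add_assoc] using ih h.2

/-- An adjacent transposition of distinct colours crosses a square of `C`. -/
lemma AgreeAlong.perm (hC : Complete E C) (h : CComp E C lam) (h' : CComp E C lam')
    {w w' : List (Fin k)} (hw : w.Perm w') {p : Fin k → ℕ} (hfit : p + wordDeg w ≤ M)
    (hag : AgreeAlong lam lam' p w) : AgreeAlong lam lam' p w' := by
  induction hw generalizing p with
  | nil => exact hag
  | cons a _ ih => exact ⟨hag.1, ih (by rwa [add_assoc, ← wordDeg_cons]) hag.2⟩
  | swap a b w =>
    obtain ⟨hb, ha, hw⟩ := hag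
    rcases eq_or_ne b a with rfl | hab
    · exact ⟨hb, ha, hw⟩
    · have hsq : p + (Pi.single b 1 + Pi.single a 1) ≤ M :=
        le_trans (by simp [← add_assoc]) hfit
      obtain ⟨ha', hb'⟩ := h.edgeAgree_swap hC h' hab hsq hb ha
      exact ⟨ha', hb', by rwa [add_right_comm]⟩
  | trans h₁ _ ih₁ ih₂ =>
    have hdeg : wordDeg _ = wordDeg _ := (h₁.map fun i => Pi.single i 1).sum_eq
    exact ih₂ (by rwa [← hdeg]) (ih₁ hfit hag)

lemma agreeAlong_map_colour {p : Fin k → ℕ} {x : List E.E}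
    (h : ∀ (l : ℕ) (hl : l < x.length),
      EdgeAgree lam lam' (p + colourVec E (x.take l)) (E.c x[l])) :
    AgreeAlong lam lam' p (x.map E.c) := by
  induction x generalizing p with
  | nil => trivial
  | cons e x ih =>
    refine ⟨h 0 (by simp), ih fun l hl => ?_⟩
    have := h (l + 1) (by simpa using hl)
    rwa [List.take_succ_cons, colourVec_cons, ← add_assoc] at this

lemma agreeAlong_of_traverses {x : List E.E} (t : Traverses lam x) (t' : Traverses lam' x) :
    AgreeAlong lam lam' 0 (x.map E.c) := by
  refine agreeAlong_map_colour fun l hl => ?_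
  obtain ⟨_, he⟩ := t.2 l hl
  obtain ⟨_, he'⟩ := t'.2 l hl
  have : EdgeAgree lam lam' (colourVec E (x.take l)) (E.c x[l]) := fun _ => he.trans he'.symm
  simpa using this

/-- Every edge `(q, j)` lies on a staircase `u ++ j :: v` that permutes `w`. -/
lemma AgreeAlong.onE_eq (hC : Complete E C) (h : CComp E C lam) (h' : CComp E C lam')
    {w : List (Fin k)} (hw : wordDeg w = M) (hag : AgreeAlong lam lam' 0 w) :
    lam.onE = lam'.onE := by
  funext ⟨⟨q, j⟩, hq⟩
  obtain ⟨u, rfl⟩ := exists_wordDeg_eq q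
  obtain ⟨v, hv⟩ := exists_wordDeg_eq (M - (wordDeg u + Pi.single j 1))
  have hperm : w.Perm (u ++ j :: v) := perm_of_wordDeg_eq <| by
    rw [hw, wordDeg_append, wordDeg_cons, hv, ← add_assoc, add_tsub_cancel_of_le hq]
  have := (hag.perm hC h h' hperm (by rw [zero_add, hw])).edgeAgree_of_append
  rw [zero_add] at this
  exact this hq

theorem CComp.eq_of_traverses (hC : Complete E C) (h : CComp E C lam) (h' : CComp E C lam')
    {x : List E.E} (hx : x ≠ []) (t : Traverses lam x) (t' : Traverses lam' x) : lam = lam' := by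
  have hdeg : wordDeg (x.map E.c) = M := by rw [← colourVec_eq_wordDeg, t.1]
  refine CGM.ext_of_onE (t.1 ▸ colourVec_ne_zero hx) ?_
  exact (agreeAlong_of_traverses t t').onE_eq hC h h' hdeg

end Uniqueness

local instance (E : ColouredGraph k) (C : Set (MorphOf E)) :
    TopologicalSpace (LamInfPath E C) :=
  lamTop E C

local instance (E : ColouredGraph k) : TopologicalSpace (InfCPath E) :=
  infTop E

namespace LamInfPath

variable {k : ℕ} {E : ColouredGraph k} {C : Set (MorphOf E)}

/-- The initial segment `x(0, m)`, whose degree `m - 0` is definitionally `m`. -/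
def init (x : LamInfPath E C) (m : Fin k → ℕ) : CGM (grid k m) E :=
  x.seg 0 m zero_le

lemma cComp_init (x : LamInfPath E C) (m : Fin k → ℕ) : CComp E C (x.init m) :=
  x.ccomp 0 m zero_le

lemma init_eq_restrictTo (x : LamInfPath E C) {m M : Fin k → ℕ} (h : m ≤ M) :
    x.init m = restrictTo (x.init M) 0 m (by rwa [zero_add]) :=
  (x.coh1 0 m M zero_le h).symm

lemma init_eq_init_of_le {x y : LamInfPath E C} {m M : Fin k → ℕ} (h : x.init M = y.init M)
    (hm : m ≤ M) : x.init m = y.init m := by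
  rw [x.init_eq_restrictTo hm, y.init_eq_restrictTo hm, h]

lemma init_onE_of_le (x : LamInfPath E C) {m M : Fin k → ℕ} (h : m ≤ M) {q : Fin k → ℕ}
    {i : Fin k} (hq : q + Pi.single i 1 ≤ m) :
    (x.init m).onE ⟨(q, i), hq⟩ = (x.init M).onE ⟨(q, i), hq.trans h⟩ := by
  rw [x.init_eq_restrictTo h]
  exact (x.init M).onE_congr (zero_add q) rfl _ _

lemma ext_init {x y : LamInfPath E C} (h : ∀ M, x.init M = y.init M) : x = y := by
  have hseg : x.seg = y.seg := by
    funext p q hpq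
    rw [← x.coh2 0 p q zero_le hpq, ← y.coh2 0 p q zero_le hpq]
    exact congrArg (fun t => restrictTo t (p - 0) (q - p) (tsub_chain_bound zero_le hpq)) (h q)
  cases x; cases y
  cases hseg
  rfl

lemma mk_seg_eq_iff (x : LamInfPath E C) (m : Fin k → ℕ) (μ : CGM (grid k m) E) :
    (⟨m - 0, x.seg 0 m zero_le⟩ : MorphOf E) = ⟨m, μ⟩ ↔ x.init m = μ :=
  (sigma_mk_injective (β := fun m => CGM (grid k m) E)).eq_iff

lemma isOpen_setOf_init_eq (m : Fin k → ℕ) (μ : CGM (grid k m) E) :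
    IsOpen {x : LamInfPath E C | x.init m = μ} :=
  TopologicalSpace.isOpen_generateFrom_of_mem
    ⟨m, μ, Set.ext fun x => (mk_seg_eq_iff x m μ).symm⟩

end LamInfPath

section InfCPath

variable {k : ℕ} {E : ColouredGraph k}

lemma isOpen_iff_forall_cylinder {A : Set (InfCPath E)} :
    IsOpen A ↔ ∀ y ∈ A, ∃ n, Subtype.val ⁻¹' PiNat.cylinder y.1 n ⊆ A := by
  let _ : TopologicalSpace E.E := ⊥
  have : DiscreteTopology E.E := ⟨rfl⟩
  have hB := (PiNat.isTopologicalBasis_cylinders fun _ => E.E).induced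
    (Subtype.val : InfCPath E → ℕ → E.E)
  refine (hB.isOpen_iff (s := A)).trans ⟨?_, ?_⟩
  · rintro h y hy
    obtain ⟨_, ⟨_, ⟨x, n, rfl⟩, rfl⟩, hyt, hts⟩ := h y hy
    exact ⟨n, by rwa [PiNat.mem_cylinder_iff_eq.1 hyt]⟩
  · rintro h y hy
    obtain ⟨n, hn⟩ := h y hy
    exact ⟨_, ⟨_, ⟨y.1, n, rfl⟩, rfl⟩, PiNat.self_mem_cylinder _ _, hn⟩

lemma takeList_eq_map_range (f : ℕ → E.E) (n : ℕ) : takeList f n = (List.range n).map f :=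
  List.ext_getElem (by simp [takeList]) fun _ _ _ => by simp [takeList]

lemma takeList_ne_nil (f : ℕ → E.E) {n : ℕ} (hn : 0 < n) : takeList f n ≠ [] := by
  simpa [takeList_eq_map_range] using hn.ne'

lemma takeList_eq_of_mem_cylinder {f g : ℕ → E.E} {n : ℕ} (h : f ∈ PiNat.cylinder g n) :
    takeList f n = takeList g n :=
  List.ofFn_inj.2 (funext fun i => h i i.isLt)

lemma colourVec_takeList_apply (f : ℕ → E.E) (n : ℕ) (i : Fin k) :
    colourVec E (takeList f n) i = Nat.count (fun l => E.c (f l) = i) n := by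
  induction n with
  | zero => rfl
  | succ n ih =>
    rw [takeList_eq_map_range] at ih ⊢
    simp [List.range_succ, ih, Nat.count_succ, Pi.single_apply, eq_comm]

lemma InfCPath.exists_le_colourVec (y : InfCPath E) (m : Fin k → ℕ) :
    ∃ n, 0 < n ∧ m ≤ colourVec E (takeList y.1 n) := by
  have hcount (i : Fin k) : ∀ᶠ n in atTop, m i ≤ colourVec E (takeList y.1 n) i := by
    simp only [colourVec_takeList_apply]
    have hunbdd (b : ℕ) : ∃ n, b ≤ Nat.count (fun l => E.c (y.1 l) = i) n :=
      ⟨_, (Nat.count_nth_of_infinite (y.2.2 i) b).ge⟩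
    exact (tendsto_atTop_atTop_of_monotone (Nat.count_monotone _) hunbdd).eventually_ge_atTop _
  obtain ⟨n, hn, hm⟩ := ((eventually_gt_atTop 0).and (eventually_all.2 hcount)).exists
  exact ⟨n, hn, hm⟩

end InfCPath

section Traversal

variable {k : ℕ} {E : ColouredGraph k} {C : Set (MorphOf E)}

lemma continuous_of_traverses (hC : Complete E C) {π : InfCPath E → LamInfPath E C}
    (hπ : ∀ x n, Traverses ((π x).init (colourVec E (takeList x.1 n))) (takeList x.1 n)) :
    Continuous π := by
  refine continuous_generateFrom_iff.2 ?_
  rintro _ ⟨m, μ, rfl⟩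
  simp only [LamInfPath.mk_seg_eq_iff]
  refine isOpen_iff_forall_cylinder.2 fun y hy => ?_
  obtain ⟨n, hn, hm⟩ := y.exists_le_colourVec m
  refine ⟨n, fun z hz => ?_⟩
  have hzy : takeList z.1 n = takeList y.1 n := takeList_eq_of_mem_cylinder hz
  have hinit : (π z).init (colourVec E (takeList y.1 n)) = (π y).init _ :=
    ((π z).cComp_init _).eq_of_traverses hC ((π y).cComp_init _) (takeList_ne_nil _ hn)
      (hzy ▸ hπ z n) (hπ y n)
  exact (LamInfPath.init_eq_init_of_le hinit hm).trans hy

end Traversal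

section Lift

open Fin.NatCast

variable {k : ℕ} [NeZero k] {E : ColouredGraph k} {C : Set (MorphOf E)}

/-- Degrees of the prefixes of the colour word `0 1 ⋯ (k-1) 0 1 ⋯`. -/
def stair : ℕ → Fin k → ℕ
  | 0 => 0
  | n + 1 => stair n + Pi.single (n : Fin k) 1

lemma stair_mono : Monotone (stair (k := k)) :=
  monotone_nat_of_le_succ fun _ => le_self_add

lemma stair_add_single_le {n N : ℕ} (h : n < N) :
    stair n + Pi.single (n : Fin k) 1 ≤ stair N :=
  stair_mono (k := k) h

namespace LamInfPath

def liftEdge (x : LamInfPath E C) (n : ℕ) : E.E :=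
  (x.init (stair (n + 1))).onE ⟨(stair n, (n : Fin k)), le_rfl⟩

lemma liftEdge_eq (x : LamInfPath E C) {n N : ℕ} (h : n < N) :
    x.liftEdge n = (x.init (stair N)).onE ⟨(stair n, (n : Fin k)), stair_add_single_le h⟩ :=
  x.init_onE_of_le (stair_mono (k := k) h) _

lemma c_liftEdge (x : LamInfPath E C) (n : ℕ) : E.c (x.liftEdge n) = (n : Fin k) :=
  CGM.c_comm _ _

lemma s_liftEdge (x : LamInfPath E C) (n : ℕ) :
    E.s (x.liftEdge n) = E.r (x.liftEdge (n + 1)) := by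
  rw [x.liftEdge_eq (by omega : n < n + 2), x.liftEdge_eq (by omega : n + 1 < n + 2)]
  let f := x.init (stair (n + 2))
  have hs := f.s_comm ⟨(stair n, (n : Fin k)), stair_add_single_le (by omega)⟩
  have hr := f.r_comm ⟨(stair (n + 1), ((n + 1 : ℕ) : Fin k)), stair_add_single_le (by omega)⟩
  exact hs.trans hr.symm

lemma infinite_setOf_c_liftEdge_eq (x : LamInfPath E C) (i : Fin k) :
    {n | E.c (x.liftEdge n) = i}.Infinite := by
  refine Set.infinite_of_injective_forall_mem (f := fun t : ℕ => i.val + t * k) ?_ fun t => ?_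
  · intro a b hab
    exact Nat.eq_of_mul_eq_mul_right (Nat.pos_of_neZero k) (Nat.add_left_cancel hab)
  · simp [c_liftEdge]

def lift (x : LamInfPath E C) : InfCPath E :=
  ⟨x.liftEdge, x.s_liftEdge, x.infinite_setOf_c_liftEdge_eq⟩

lemma colourVec_takeList_liftEdge (x : LamInfPath E C) (n : ℕ) :
    colourVec E (takeList x.liftEdge n) = stair n := by
  induction n with
  | zero => rfl
  | succ n ih =>
    rw [takeList_eq_map_range] at ih ⊢
    simp [List.range_succ, ih, stair, c_liftEdge]

lemma traverses_takeList_liftEdge (x : LamInfPath E C) (n : ℕ) :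
    Traverses (x.init (stair n)) (takeList x.liftEdge n) := by
  refine ⟨x.colourVec_takeList_liftEdge n, fun l hl => ?_⟩
  have hln : l < n := by simpa [takeList_eq_map_range] using hl
  have hget : (takeList x.liftEdge n).get ⟨l, hl⟩ = x.liftEdge l := by
    simp [takeList_eq_map_range]
  have htake : colourVec E ((takeList x.liftEdge n).take l) = stair l := by
    rw [takeList_eq_map_range, ← List.map_take, List.take_range, min_eq_left hln.le,
      ← takeList_eq_map_range, colourVec_takeList_liftEdge]
  have hc : E.c ((takeList x.liftEdge n).get ⟨l, hl⟩) = (l : Fin k) := by rw [hget, c_liftEdge]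
  have hfit : stair l + Pi.single (l : Fin k) 1 ≤ stair n := stair_add_single_le hln
  refine ⟨by rwa [htake, hc], ?_⟩
  rw [(x.init (stair n)).onE_congr htake hc _ hfit, hget, x.liftEdge_eq hln]

lemma liftEdge_eq_of_init_eq {x y : LamInfPath E C} {N : ℕ}
    (h : x.init (stair N) = y.init (stair N)) {l : ℕ} (hl : l < N) :
    x.liftEdge l = y.liftEdge l := by
  rw [x.liftEdge_eq hl, y.liftEdge_eq hl, h]

lemma continuous_lift : Continuous (lift : LamInfPath E C → InfCPath E) := by
  refine continuous_def.2 fun A hA => isOpen_iff_forall_mem_open.2 fun x hx => ?_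
  obtain ⟨n, hn⟩ := isOpen_iff_forall_cylinder.1 hA _ hx
  refine ⟨_, fun z hz => hn ?_, isOpen_setOf_init_eq (stair n) (x.init (stair n)), rfl⟩
  exact fun l hl => liftEdge_eq_of_init_eq hz hl

lemma leftInverse_lift (hC : Complete E C) {π : InfCPath E → LamInfPath E C}
    (hπ : ∀ x n, Traverses ((π x).init (colourVec E (takeList x.1 n))) (takeList x.1 n)) :
    Function.LeftInverse π lift := fun x => by
  refine ext_init fun M => ?_
  obtain ⟨n, hn, hM⟩ := x.lift.exists_le_colourVec M
  have hdeg : colourVec E (takeList x.liftEdge n) = stair n := x.colourVec_takeList_liftEdge n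
  have hinit : (π x.lift).init (stair n) = x.init (stair n) :=
    ((π x.lift).cComp_init _).eq_of_traverses hC (x.cComp_init _) (takeList_ne_nil _ hn)
      (hdeg ▸ hπ x.lift n) (x.traverses_takeList_liftEdge n)
  exact init_eq_init_of_le hinit (hdeg ▸ hM)

end LamInfPath

end Lift

lemma isEmpty_infCPath_of_fin_zero (E : ColouredGraph 0) : IsEmpty (InfCPath E) :=
  ⟨fun y => (E.c (y.1 0)).elim0⟩

lemma discreteTopology_lamInfPath_of_fin_zero (E : ColouredGraph 0) (C : Set (MorphOf E)) :
    DiscreteTopology (LamInfPath E C) := by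
  refine discreteTopology_iff_isOpen_singleton.2 fun x => ?_
  convert LamInfPath.isOpen_setOf_init_eq 0 (x.init 0) using 1
  ext y
  refine ⟨fun h => h ▸ rfl, fun h => LamInfPath.ext_init fun M => ?_⟩
  obtain rfl : M = 0 := Subsingleton.elim _ _
  exact h

theorem infinite_path_space_quotient_topology_general {k : ℕ} (E : ColouredGraph k)
    (C : Set (MorphOf E)) (hC : Complete E C)
    (π : InfCPath E → LamInfPath E C)
    (hπ : ∀ (x : InfCPath E) (n : ℕ),
      Traverses ((π x).seg 0 (colourVec E (takeList x.1 n)) zero_le)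
        (takeList x.1 n))
    (U : Set (LamInfPath E C)) :
    @IsOpen _ (lamTop E C) U ↔ @IsOpen _ (infTop E) (π ⁻¹' U) := by
  rcases Nat.eq_zero_or_pos k with rfl | hk
  · have := isEmpty_infCPath_of_fin_zero E
    have := discreteTopology_lamInfPath_of_fin_zero E C
    exact iff_of_true (isOpen_discrete U) (by simp [Set.eq_empty_of_isEmpty (π ⁻¹' U)])
  · have : NeZero k := ⟨hk.ne'⟩
    have hquot : IsQuotientMap π := .of_inverse LamInfPath.continuous_lift
      (continuous_of_traverses hC hπ) (LamInfPath.leftInverse_lift hC hπ)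
    exact hquot.isOpen_preimage.symm

/-- For `Λ = Λ_{(E,C)}` row-finite with no sources, `U ⊆ Λ^∞` is open iff
`π⁻¹(U)` is open in `E^{∞,k}`: the cylinder topology on `Λ^∞` is the quotient
topology induced by the traversal map `π`. -/
theorem infinite_path_space_quotient_topology {k : ℕ} (E : ColouredGraph k)
    (C : Set (MorphOf E)) (hC : Complete E C) (hA : Associative E C)
    (hRF : ∀ (v : E.V) (i : Fin k), {e : E.E | E.r e = v ∧ E.c e = i}.Finite)
    (hNS : ∀ (v : E.V) (i : Fin k), {e : E.E | E.r e = v ∧ E.c e = i}.Nonempty)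
    (π : InfCPath E → LamInfPath E C)
    (hπ : ∀ (x : InfCPath E) (n : ℕ),
      Traverses ((π x).seg 0 (colourVec E (takeList x.1 n)) zero_le)
        (takeList x.1 n))
    (U : Set (LamInfPath E C)) :
    @IsOpen _ (lamTop E C) U ↔ @IsOpen _ (infTop E) (π ⁻¹' U) :=
  infinite_path_space_quotient_topology_general E C hC π hπ U

end Paper
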